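/- Let n ≥ 1, let D ⊆ ℝ^{2n} be open, and let J be a C^∞ almost complex structure on D. Assume there exists a C² function τ : D → ℝ with ℒ(τ)_z(v) > 0 for every z ∈ D and every v ≠ 0. Let u : D → ℝ be C² with ℒ(u)_z(v) ≥ 0 for all z ∈ D and v ∈ ℝ^{2n}. Suppose u is maximal, in the sense that for every open set U whose closure is compact and contained in D, and every C² function h : U → ℝ with ℒ(h)_z(v) ≥ 0 for all z ∈ U and v ∈ ℝ^{2n} such that limsup_{w→x, w∈U} h(w) ≤ u(x) for every x ∈ ∂U, one has h ≤ u on U. Then for every z ∈ D there exists v ≠ 0 with ℒ(u)_z(v) = 0, i.e. u solves the homogeneous almost complex Monge–Ampère equation (ddᶜu + J*(ddᶜu))ⁿ = 0. -/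

import Mathlib

open Filter Topology

/-- The 2-form `ddᶜu` associated with an almost complex structure `J`:
`ddᶜu_z(v,w) = −∂_v(z' ↦ du_{z'}(J(z')w)) + ∂_w(z' ↦ du_{z'}(J(z')v))`. -/
noncomputable def acDDc {E : Type*} [NormedAddCommGroup E] [NormedSpace ℝ E]
    (J : E → (E →L[ℝ] E)) (u : E → ℝ) (z v w : E) : ℝ :=
  - fderiv ℝ (fun z' => fderiv ℝ u z' (J z' w)) z v
    + fderiv ℝ (fun z' => fderiv ℝ u z' (J z' v)) z w

/-- The Levi form `ℒ(u)_z(v) := ddᶜu_z(v, J(z)v)`. -/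
noncomputable def acLevi {E : Type*} [NormedAddCommGroup E] [NormedSpace ℝ E]
    (J : E → (E →L[ℝ] E)) (u : E → ℝ) (z v : E) : ℝ :=
  acDDc J u z v (J z v)

namespace MAhelper

open Metric

variable {E : Type*} [NormedAddCommGroup E] [NormedSpace ℝ E]

/-- `Amap J f z = (df_z) ∘ J z`. -/
noncomputable def Amap (J : E → (E →L[ℝ] E)) (f : E → ℝ) (z : E) : E →L[ℝ] ℝ :=
  (fderiv ℝ f z).comp (J z)

/-- Concrete formula for the Levi form via the derivative of `Amap`. -/
noncomputable def Lev (J : E → (E →L[ℝ] E)) (f : E → ℝ) (z v : E) : ℝ :=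
  - (fderiv ℝ (Amap J f) z v) (J z v) + (fderiv ℝ (Amap J f) z (J z v)) v

variable {J : E → (E →L[ℝ] E)} {f u g : E → ℝ} {D : Set E}

lemma diffAt_Amap (hD : IsOpen D) (hJ : ContDiffOn ℝ (⊤ : ℕ∞) J D) (hf : ContDiffOn ℝ 2 f D)
    {z : E} (hz : z ∈ D) : DifferentiableAt ℝ (Amap J f) z := by
  have h1 : ContDiffAt ℝ 2 f z := hf.contDiffAt (hD.mem_nhds hz)
  have h2 : ContDiffAt ℝ 1 (fderiv ℝ f) z := h1.fderiv_right (by norm_num)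
  exact (h2.differentiableAt one_ne_zero).clm_comp
    ((hJ.contDiffAt (hD.mem_nhds hz)).differentiableAt (by simp))

lemma hasFDerivAt_inner (hD : IsOpen D) (hJ : ContDiffOn ℝ (⊤ : ℕ∞) J D) (hf : ContDiffOn ℝ 2 f D)
    {z : E} (hz : z ∈ D) (w : E) :
    HasFDerivAt (fun z' => fderiv ℝ f z' (J z' w))
      ((fderiv ℝ (Amap J f) z).flip w) z := by
  have hA := diffAt_Amap hD hJ hf hz
  have := hA.hasFDerivAt.clm_apply (hasFDerivAt_const w z)
  simpa [Amap] using this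

lemma acDDc_eq (hD : IsOpen D) (hJ : ContDiffOn ℝ (⊤ : ℕ∞) J D) (hf : ContDiffOn ℝ 2 f D)
    {z : E} (hz : z ∈ D) (v w : E) :
    acDDc J f z v w = - (fderiv ℝ (Amap J f) z v) w + (fderiv ℝ (Amap J f) z w) v := by
  rw [acDDc, (hasFDerivAt_inner hD hJ hf hz w).fderiv, (hasFDerivAt_inner hD hJ hf hz v).fderiv]
  rfl

lemma acLevi_eq (hD : IsOpen D) (hJ : ContDiffOn ℝ (⊤ : ℕ∞) J D) (hf : ContDiffOn ℝ 2 f D)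
    {z : E} (hz : z ∈ D) (v : E) :
    acLevi J f z v = Lev J f z v := by
  rw [acLevi, acDDc_eq hD hJ hf hz, Lev]

lemma Lev_smul (z v : E) (c : ℝ) : Lev J f z (c • v) = c ^ 2 * Lev J f z v := by
  simp only [Lev, map_smul, ContinuousLinearMap.smul_apply, smul_eq_mul]
  ring

lemma Lev_zero (z : E) : Lev J f z 0 = 0 := by
  simpa using Lev_smul (J := J) (f := f) z 0 (0 : ℝ)

lemma abs_Lev_le (z v : E) :
    |Lev J f z v| ≤ 2 * ‖fderiv ℝ (Amap J f) z‖ * ‖J z‖ * ‖v‖ ^ 2 := by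
  set B := fderiv ℝ (Amap J f) z
  have h1 : |(B v) (J z v)| ≤ ‖B‖ * ‖J z‖ * ‖v‖ ^ 2 := by
    calc |(B v) (J z v)| ≤ ‖B v‖ * ‖J z v‖ := (B v).le_opNorm _
    _ ≤ (‖B‖ * ‖v‖) * (‖J z‖ * ‖v‖) := by
        gcongr
        · exact B.le_opNorm v
        · exact (J z).le_opNorm v
    _ = ‖B‖ * ‖J z‖ * ‖v‖ ^ 2 := by ring
  have h2 : |(B (J z v)) v| ≤ ‖B‖ * ‖J z‖ * ‖v‖ ^ 2 := by
    calc |(B (J z v)) v| ≤ ‖B (J z v)‖ * ‖v‖ := (B (J z v)).le_opNorm _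
    _ ≤ (‖B‖ * (‖J z‖ * ‖v‖)) * ‖v‖ := by
        gcongr
        calc ‖B (J z v)‖ ≤ ‖B‖ * ‖J z v‖ := B.le_opNorm _
        _ ≤ ‖B‖ * (‖J z‖ * ‖v‖) := by gcongr; exact (J z).le_opNorm v
    _ = ‖B‖ * ‖J z‖ * ‖v‖ ^ 2 := by ring
  calc |Lev J f z v| ≤ |(B v) (J z v)| + |(B (J z v)) v| := by
        rw [Lev]; exact (abs_add_le _ _).trans (by rw [abs_neg])
  _ ≤ 2 * ‖B‖ * ‖J z‖ * ‖v‖ ^ 2 := by linarith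

lemma contDiffOn_Amap (hD : IsOpen D) (hJ : ContDiffOn ℝ (⊤ : ℕ∞) J D) (hf : ContDiffOn ℝ 2 f D) :
    ContDiffOn ℝ 1 (Amap J f) D :=
  (hf.fderiv_of_isOpen hD (by norm_num)).clm_comp (hJ.of_le (by simp))

lemma continuousOn_fderiv_Amap (hD : IsOpen D) (hJ : ContDiffOn ℝ (⊤ : ℕ∞) J D)
    (hf : ContDiffOn ℝ 2 f D) : ContinuousOn (fun z => fderiv ℝ (Amap J f) z) D :=
  (contDiffOn_Amap hD hJ hf).continuousOn_fderiv_of_isOpen hD le_rfl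

lemma continuousOn_Lev (hD : IsOpen D) (hJ : ContDiffOn ℝ (⊤ : ℕ∞) J D) (hf : ContDiffOn ℝ 2 f D) :
    ContinuousOn (fun p : E × E => Lev J f p.1 p.2) (D ×ˢ (Set.univ : Set E)) := by
  have hBc : ContinuousOn (fun p : E × E => fderiv ℝ (Amap J f) p.1)
      (D ×ˢ (Set.univ : Set E)) :=
    (continuousOn_fderiv_Amap hD hJ hf).comp continuousOn_fst (fun p hp => hp.1)
  have hJc : ContinuousOn (fun p : E × E => J p.1) (D ×ˢ (Set.univ : Set E)) :=
    (hJ.continuousOn).comp continuousOn_fst (fun p hp => hp.1)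
  have hJv : ContinuousOn (fun p : E × E => J p.1 p.2) (D ×ˢ (Set.univ : Set E)) :=
    hJc.clm_apply continuousOn_snd
  have h1 : ContinuousOn (fun p : E × E => (fderiv ℝ (Amap J f) p.1 p.2) (J p.1 p.2))
      (D ×ˢ (Set.univ : Set E)) := (hBc.clm_apply continuousOn_snd).clm_apply hJv
  have h2 : ContinuousOn (fun p : E × E => (fderiv ℝ (Amap J f) p.1 (J p.1 p.2)) p.2)
      (D ×ˢ (Set.univ : Set E)) := (hBc.clm_apply hJv).clm_apply continuousOn_snd
  exact (h1.neg).add h2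

lemma Lev_add_smul (hD : IsOpen D) (hJ : ContDiffOn ℝ (⊤ : ℕ∞) J D)
    (hu : ContDiffOn ℝ 2 u D) (hg : ContDiffOn ℝ 2 g D)
    {z : E} (hz : z ∈ D) (δ : ℝ) (v : E) :
    Lev J (fun w => u w + δ * g w) z v = Lev J u z v + δ * Lev J g z v := by
  have heq : ∀ z' ∈ D, Amap J (fun w => u w + δ * g w) z' = Amap J u z' + δ • Amap J g z' := by
    intro z' hz'
    have hdu : DifferentiableAt ℝ u z' :=
      (hu.contDiffAt (hD.mem_nhds hz')).differentiableAt two_ne_zero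
    have hdg : DifferentiableAt ℝ g z' :=
      (hg.contDiffAt (hD.mem_nhds hz')).differentiableAt two_ne_zero
    have : fderiv ℝ (fun w => u w + δ * g w) z' = fderiv ℝ u z' + δ • fderiv ℝ g z' := by
      rw [fderiv_fun_add hdu (hdg.const_mul δ), fderiv_const_mul hdg]
    simp only [Amap, this, ContinuousLinearMap.add_comp, ContinuousLinearMap.smul_comp]
  have hev : Amap J (fun w => u w + δ * g w) =ᶠ[𝓝 z]
      fun z' => Amap J u z' + δ • Amap J g z' :=
    eventually_of_mem (hD.mem_nhds hz) heq
  have hAu := diffAt_Amap hD hJ hu hz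
  have hAg := diffAt_Amap hD hJ hg hz
  have hfd : fderiv ℝ (Amap J (fun w => u w + δ * g w)) z
      = fderiv ℝ (Amap J u) z + δ • fderiv ℝ (Amap J g) z := by
    rw [hev.fderiv_eq, fderiv_fun_add hAu (hAg.fun_const_smul δ), fderiv_fun_const_smul hAg]
  simp only [Lev, hfd, ContinuousLinearMap.add_apply, ContinuousLinearMap.smul_apply,
    ContinuousLinearMap.coe_add', Pi.add_apply, ContinuousLinearMap.coe_smul', Pi.smul_apply,
    smul_eq_mul]
  ring

end MAhelper

open MAhelper Metric

/-- A maximal C² J-plurisubharmonic function on a strongly pseudoconvex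
almost complex domain solves the homogeneous almost complex Monge–Ampère equation:
at every point its Levi form has a nontrivial kernel vector. -/
theorem stmt_1 {n : ℕ} (hn : 1 ≤ n)
    (D : Set (EuclideanSpace ℝ (Fin (2 * n)))) (hD : IsOpen D)
    (J : EuclideanSpace ℝ (Fin (2 * n)) →
      (EuclideanSpace ℝ (Fin (2 * n)) →L[ℝ] EuclideanSpace ℝ (Fin (2 * n))))
    (hJsmooth : ContDiffOn ℝ (⊤ : ℕ∞) J D)
    (hJsq : ∀ z ∈ D, (J z).comp (J z) =
      - ContinuousLinearMap.id ℝ (EuclideanSpace ℝ (Fin (2 * n))))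
    (τ : EuclideanSpace ℝ (Fin (2 * n)) → ℝ)
    (hτ : ContDiffOn ℝ 2 τ D)
    (hτstrict : ∀ z ∈ D, ∀ v, v ≠ 0 → 0 < acLevi J τ z v)
    (u : EuclideanSpace ℝ (Fin (2 * n)) → ℝ)
    (hu : ContDiffOn ℝ 2 u D)
    (hupsh : ∀ z ∈ D, ∀ v, 0 ≤ acLevi J u z v)
    (hmax : ∀ U : Set (EuclideanSpace ℝ (Fin (2 * n))), IsOpen U →
      IsCompact (closure U) → closure U ⊆ D →
      ∀ h : EuclideanSpace ℝ (Fin (2 * n)) → ℝ, ContDiffOn ℝ 2 h U →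
        (∀ z ∈ U, ∀ v, 0 ≤ acLevi J h z v) →
        (∀ x ∈ frontier U, limsup h (𝓝[U] x) ≤ u x) →
        ∀ z ∈ U, h z ≤ u z) :
    ∀ z ∈ D, ∃ v, v ≠ 0 ∧ acLevi J u z v = 0 := by
  intro z₀ hz₀
  by_contra hcon
  push_neg at hcon
  have hpos : ∀ v, v ≠ 0 → 0 < acLevi J u z₀ v := fun v hv =>
    lt_of_le_of_ne (hupsh z₀ hz₀ v) (Ne.symm (hcon v hv))
  -- a unit vector exists
  haveI : Nonempty (Fin (2 * n)) := ⟨⟨0, by omega⟩⟩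
  obtain ⟨e₀, he₀⟩ := exists_ne (0 : EuclideanSpace ℝ (Fin (2 * n)))
  have heS : (‖e₀‖⁻¹ : ℝ) • e₀ ∈ sphere (0 : EuclideanSpace ℝ (Fin (2 * n))) 1 := by
    rw [mem_sphere_zero_iff_norm]
    exact norm_smul_inv_norm he₀
  -- minimum of the Levi form of u over the unit sphere at z₀
  have hLevCont : Continuous fun v : EuclideanSpace ℝ (Fin (2 * n)) => Lev J u z₀ v := by
    have hB : Continuous fun v : EuclideanSpace ℝ (Fin (2 * n)) => fderiv ℝ (Amap J u) z₀ v :=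
      (fderiv ℝ (Amap J u) z₀).continuous
    have hJ0 : Continuous fun v : EuclideanSpace ℝ (Fin (2 * n)) => J z₀ v := (J z₀).continuous
    exact ((hB.clm_apply hJ0).neg).add ((hB.comp hJ0).clm_apply continuous_id)
  obtain ⟨v₀, hv₀S, hv₀min⟩ := (isCompact_sphere (0 : EuclideanSpace ℝ (Fin (2 * n))) 1).exists_isMinOn
    ⟨_, heS⟩ hLevCont.continuousOn
  have hv₀ne : v₀ ≠ 0 := by
    have : ‖v₀‖ = 1 := mem_sphere_zero_iff_norm.mp hv₀S
    intro h; rw [h, norm_zero] at this; norm_num at this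
  have hc₀ : 0 < Lev J u z₀ v₀ := by
    rw [← acLevi_eq hD hJsmooth hu hz₀]
    exact hpos v₀ hv₀ne
  set c : ℝ := Lev J u z₀ v₀ / 2 with hc_def
  have hc : 0 < c := by positivity
  -- tube lemma to get a uniform lower bound near z₀
  set W := (D ×ˢ (Set.univ : Set (EuclideanSpace ℝ (Fin (2 * n))))) ∩
    ((fun p : (EuclideanSpace ℝ (Fin (2 * n))) × (EuclideanSpace ℝ (Fin (2 * n))) =>
      Lev J u p.1 p.2) ⁻¹' Set.Ioi c) with hW_def
  have hWopen : IsOpen W :=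
    (continuousOn_Lev hD hJsmooth hu).isOpen_inter_preimage (hD.prod isOpen_univ) isOpen_Ioi
  have hsub : ({z₀} : Set (EuclideanSpace ℝ (Fin (2 * n)))) ×ˢ sphere (0 : EuclideanSpace ℝ (Fin (2 * n))) 1 ⊆ W := by
    rintro ⟨z, v⟩ ⟨hz, hv⟩
    simp only [Set.mem_singleton_iff] at hz
    refine ⟨⟨by rw [hz]; exact hz₀, Set.mem_univ _⟩, ?_⟩
    have hmin := isMinOn_iff.mp hv₀min v hv
    simp only [Set.mem_preimage, Set.mem_Ioi]
    rw [hz, hc_def]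
    linarith
  obtain ⟨O, V, hOopen, _, hOz, hVs, hOVW⟩ :=
    generalized_tube_lemma isCompact_singleton (isCompact_sphere (0 : EuclideanSpace ℝ (Fin (2 * n))) 1) hWopen hsub
  obtain ⟨ε, hε, hball⟩ := Metric.isOpen_iff.mp (hOopen.inter hD) z₀
    ⟨hOz rfl, hz₀⟩
  set r : ℝ := ε / 2 with hr_def
  have hr : 0 < r := by positivity
  have hKball : closedBall z₀ r ⊆ ball z₀ ε := closedBall_subset_ball (by rw [hr_def]; linarith)
  have hKD : closedBall z₀ r ⊆ D := fun x hx => (hball (hKball hx)).2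
  have hKO : closedBall z₀ r ⊆ O := fun x hx => (hball (hKball hx)).1
  -- uniform lower bound for the Levi form of u
  have hlow : ∀ z ∈ closedBall z₀ r, ∀ v, c * ‖v‖ ^ 2 ≤ Lev J u z v := by
    intro z hz v
    rcases eq_or_ne v 0 with rfl | hv
    · simp [Lev_zero]
    · have hwS : (‖v‖⁻¹ : ℝ) • v ∈ sphere (0 : EuclideanSpace ℝ (Fin (2 * n))) 1 := by
        rw [mem_sphere_zero_iff_norm]; exact norm_smul_inv_norm hv
      have hmem : (z, (‖v‖⁻¹ : ℝ) • v) ∈ W := hOVW ⟨hKO hz, hVs hwS⟩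
      have h1 : c < Lev J u z ((‖v‖⁻¹ : ℝ) • v) := hmem.2
      have hvne : ‖v‖ ≠ 0 := norm_ne_zero_iff.mpr hv
      have h2 : Lev J u z v = ‖v‖ ^ 2 * Lev J u z ((‖v‖⁻¹ : ℝ) • v) := by
        rw [← Lev_smul, smul_smul, mul_inv_cancel₀ hvne, one_smul]
      rw [h2]
      have hnv : (0 : ℝ) < ‖v‖ ^ 2 := by positivity
      nlinarith
  -- the bump function
  set g : EuclideanSpace ℝ (Fin (2 * n)) → ℝ := fun w => r ^ 2 - ‖w - z₀‖ ^ 2 with hg_def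
  have hgC : ContDiff ℝ 2 g :=
    contDiff_const.sub ((contDiff_id.sub contDiff_const).norm_sq (𝕜 := ℝ))
  have hgD : ContDiffOn ℝ 2 g D := hgC.contDiffOn
  -- bound for the Levi form of g on the closed ball
  have hφcont : ContinuousOn (fun z => 2 * ‖fderiv ℝ (Amap J g) z‖ * ‖J z‖) D :=
    (continuousOn_const.fun_mul (ContinuousOn.norm (E := (EuclideanSpace ℝ (Fin (2 * n)) →L[ℝ] EuclideanSpace ℝ (Fin (2 * n)) →L[ℝ] ℝ)) (continuousOn_fderiv_Amap hD hJsmooth hgD))).fun_mul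
      hJsmooth.continuousOn.norm
  obtain ⟨Cg, hCg⟩ := (isCompact_closedBall z₀ r).exists_bound_of_continuousOn
    (hφcont.mono hKD)
  have hLevg : ∀ z ∈ closedBall z₀ r, ∀ v, |Lev J g z v| ≤ |Cg| * ‖v‖ ^ 2 := by
    intro z hz v
    have h1 := abs_Lev_le (J := J) (f := g) z v
    have h2 : 2 * ‖fderiv ℝ (Amap J g) z‖ * ‖J z‖ ≤ |Cg| := by
      have := hCg z hz
      rw [Real.norm_eq_abs] at this
      calc 2 * ‖fderiv ℝ (Amap J g) z‖ * ‖J z‖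
          ≤ |2 * ‖fderiv ℝ (Amap J g) z‖ * ‖J z‖| := le_abs_self _
      _ ≤ Cg := this
      _ ≤ |Cg| := le_abs_self _
    calc |Lev J g z v| ≤ 2 * ‖fderiv ℝ (Amap J g) z‖ * ‖J z‖ * ‖v‖ ^ 2 := h1
    _ ≤ |Cg| * ‖v‖ ^ 2 := by
        apply mul_le_mul_of_nonneg_right h2 (by positivity)
  -- choice of δ and the competitor h
  set δ : ℝ := c / (|Cg| + 1) with hδ_def
  have hδ : 0 < δ := by positivity
  have hδc : δ * (|Cg| + 1) = c := by
    rw [hδ_def]; field_simp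
  set h : EuclideanSpace ℝ (Fin (2 * n)) → ℝ := fun w => u w + δ * g w with hh_def
  have hhD : ContDiffOn ℝ 2 h D := hu.add ((contDiff_const.mul hgC).contDiffOn)
  have hballD : ball z₀ r ⊆ D := fun x hx => hKD (ball_subset_closedBall hx)
  -- apply maximality
  have hclosure : closure (ball z₀ r) = closedBall z₀ r := closure_ball z₀ hr.ne'
  have key := hmax (ball z₀ r) isOpen_ball
    (by rw [hclosure]; exact isCompact_closedBall _ _)
    (by rw [hclosure]; exact hKD)
    h (hhD.mono hballD)
    (by
      intro z hz v
      have hzD : z ∈ D := hballD hz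
      have hzK : z ∈ closedBall z₀ r := ball_subset_closedBall hz
      rw [acLevi_eq hD hJsmooth hhD hzD, hh_def,
        Lev_add_smul hD hJsmooth hu hgD hzD]
      have h1 := hlow z hzK v
      have h2 := hLevg z hzK v
      have h3 : -(|Cg| * ‖v‖ ^ 2) ≤ Lev J g z v := neg_abs_le _ |>.trans' (by linarith [neg_le_neg h2])
      have h4 := mul_le_mul_of_nonneg_left h3 hδ.le
      have h5 : 0 ≤ ‖v‖ ^ 2 := by positivity
      nlinarith)
    (by
      intro x hx
      rw [frontier_ball z₀ hr.ne'] at hx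
      have hxD : x ∈ D := hKD (sphere_subset_closedBall hx)
      have hcx : ContinuousAt h x := by
        have h1 : ContinuousAt u x := (hu.contDiffAt (hD.mem_nhds hxD)).continuousAt
        exact h1.add ((continuous_const.mul hgC.continuous).continuousAt)
      have hne : (𝓝[ball z₀ r] x).NeBot := by
        rw [← mem_closure_iff_nhdsWithin_neBot, hclosure]
        exact sphere_subset_closedBall hx
      have htend : Tendsto h (𝓝[ball z₀ r] x) (𝓝 (h x)) :=
        (hcx.tendsto).mono_left nhdsWithin_le_nhds
      rw [htend.limsup_eq]
      have hgx : g x = 0 := by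
        have hxn : ‖x - z₀‖ = r := by
          rw [← dist_eq_norm]; exact mem_sphere.mp hx
        rw [hg_def]; simp [hxn]
      rw [hh_def]; simp [hgx])
    z₀ (mem_ball_self hr)
  -- contradiction
  have hgz₀ : g z₀ = r ^ 2 := by rw [hg_def]; simp
  have : h z₀ = u z₀ + δ * r ^ 2 := by rw [hh_def]; simp [hgz₀]
  rw [this] at key
  nlinarith [mul_pos hδ (pow_pos hr 2)]
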